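/- arXiv:1411.5172 — 2 statements merged into one kernel-verified Lean document; each statement's English description precedes it below -/
import Mathlib

section
/- Let C be a real symmetric p×p matrix with spectral decomposition C = U Λ Uᵀ, U orthogonal and Λ diagonal. Then the matrix U Λ₊ Uᵀ, where Λ₊ replaces each eigenvalue by max(λᵢ, 0), is the unique minimizer of ‖X − C‖_F over the cone of symmetric positive semidefinite matrices X. -/
/-!
Conjugating by `U` is an isometry for the Frobenius norm and preserves positive
semidefiniteness, so it suffices to project the diagonal matrix `D = diag d`. For `Y ⪰ 0` the
diagonal entries `y = Y i i` are nonnegative, and the scalar inequality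
`(a⁺ - a)² + (y - a⁺)² ≤ (y - a)²` for `y ≥ 0`, applied on the diagonal (off it `D` and `D₊`
vanish), gives the obtuse-angle inequality `‖D₊ - D‖² + ‖Y - D₊‖² ≤ ‖Y - D‖²` of a projection
onto a convex set. It yields both the minimality of `D₊` and, through `‖Y - D₊‖² ≤ 0`, its
uniqueness.
-/

open Matrix

lemma sq_max_zero_sub_add_sq_sub_max_zero_le {a y : ℝ} (hy : 0 ≤ y) :
    (max a 0 - a) ^ 2 + (y - max a 0) ^ 2 ≤ (y - a) ^ 2 := by
  rcases le_total a 0 with ha | ha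
  · rw [max_eq_right ha]; nlinarith
  · rw [max_eq_left ha]; nlinarith

lemma Matrix.posSemidef_iff_transpose_dotProduct_mulVec {n : Type*} [Fintype n]
    {X : Matrix n n ℝ} :
    X.PosSemidef ↔ Xᵀ = X ∧ ∀ v, 0 ≤ v ⬝ᵥ X *ᵥ v := by
  simp only [posSemidef_iff_dotProduct_mulVec, IsHermitian, conjTranspose_eq_transpose_of_trivial,
    star_trivial]

section SqFrobenius

variable {m n : Type*} [Fintype m] [Fintype n]

def sqFrobenius (M : Matrix m n ℝ) : ℝ := ∑ i, ∑ j, M i j ^ 2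

lemma sqFrobenius_nonneg (M : Matrix m n ℝ) : 0 ≤ sqFrobenius M :=
  Finset.sum_nonneg fun _ _ => Finset.sum_nonneg fun _ _ => sq_nonneg _

lemma sqFrobenius_eq_zero_iff {M : Matrix m n ℝ} : sqFrobenius M = 0 ↔ M = 0 := by
  refine ⟨fun h => ?_, fun h => by simp [h, sqFrobenius]⟩
  have hrows := (Fintype.sum_eq_zero_iff_of_nonneg fun i =>
    Finset.sum_nonneg fun j _ => sq_nonneg (M i j)).mp h
  ext i j
  have hentries := (Fintype.sum_eq_zero_iff_of_nonneg fun j => sq_nonneg (M i j)).mp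
    (congrFun hrows i)
  exact pow_eq_zero_iff two_ne_zero |>.mp (congrFun hentries j)

lemma sqFrobenius_eq_trace (M : Matrix m n ℝ) : sqFrobenius M = (Mᵀ * M).trace := by
  simp only [sqFrobenius, trace, diag, mul_apply, transpose_apply, sq]
  exact Finset.sum_comm

lemma sqFrobenius_conj [DecidableEq n] {U : Matrix m n ℝ} (hU : Uᵀ * U = 1)
    (M : Matrix n n ℝ) : sqFrobenius (U * M * Uᵀ) = sqFrobenius M := by
  rw [sqFrobenius_eq_trace, sqFrobenius_eq_trace, transpose_mul, transpose_mul,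
    transpose_transpose]
  calc (U * (Mᵀ * Uᵀ) * (U * M * Uᵀ)).trace = (U * (Mᵀ * (Uᵀ * U) * M) * Uᵀ).trace := by
        simp only [Matrix.mul_assoc]
    _ = (Uᵀ * U * (Mᵀ * (Uᵀ * U) * M)).trace := by
        rw [trace_mul_comm, Matrix.mul_assoc Uᵀ]
    _ = (Mᵀ * M).trace := by rw [hU, Matrix.one_mul, Matrix.mul_one]

end SqFrobenius

section Projection

variable {n : Type*} [Fintype n] [DecidableEq n]

lemma sqFrobenius_clip_add_le_of_diag_nonneg {Y : Matrix n n ℝ} (hY : ∀ i, 0 ≤ Y i i)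
    (d : n → ℝ) :
    sqFrobenius (diagonal (fun i => max (d i) 0) - diagonal d) +
        sqFrobenius (Y - diagonal (fun i => max (d i) 0)) ≤
      sqFrobenius (Y - diagonal d) := by
  simp only [sqFrobenius, ← Finset.sum_add_distrib]
  refine Finset.sum_le_sum fun i _ => Finset.sum_le_sum fun j _ => ?_
  rcases eq_or_ne i j with rfl | hij
  · simpa only [Matrix.sub_apply, diagonal_apply_eq] using
      sq_max_zero_sub_add_sq_sub_max_zero_le (a := d i) (hY i)
  · simp [diagonal_apply_ne _ hij]

lemma sqFrobenius_clip_add_le_of_posSemidef {U X : Matrix n n ℝ} (hU : U * Uᵀ = 1)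
    (hU' : Uᵀ * U = 1) (hX : X.PosSemidef) (d : n → ℝ) :
    sqFrobenius (U * diagonal (fun i => max (d i) 0) * Uᵀ - U * diagonal d * Uᵀ) +
        sqFrobenius (X - U * diagonal (fun i => max (d i) 0) * Uᵀ) ≤
      sqFrobenius (X - U * diagonal d * Uᵀ) := by
  set Y := Uᵀ * X * U
  have hXY : X = U * Y * Uᵀ := by
    simp only [Y, Matrix.mul_assoc, hU, Matrix.mul_one, ← Matrix.mul_assoc U, Matrix.one_mul]
  have hY : Y.PosSemidef := by
    simpa only [conjTranspose_eq_transpose_of_trivial] using hX.conjTranspose_mul_mul_same U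
  rw [hXY, ← Matrix.sub_mul, ← Matrix.mul_sub, ← Matrix.sub_mul, ← Matrix.mul_sub,
    ← Matrix.sub_mul, ← Matrix.mul_sub, sqFrobenius_conj hU', sqFrobenius_conj hU',
    sqFrobenius_conj hU']
  exact sqFrobenius_clip_add_le_of_diag_nonneg (fun _ => hY.diag_nonneg) d

end Projection

theorem psd_projection_eigenvalue_clipping_general {p : ℕ}
    (C U : Matrix (Fin p) (Fin p) ℝ) (d : Fin p → ℝ)
    (hU : U * Uᵀ = 1)
    (hC : C = U * Matrix.diagonal d * Uᵀ) :
    let Xstar := U * Matrix.diagonal (fun i => max (d i) 0) * Uᵀ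
    let frob : Matrix (Fin p) (Fin p) ℝ → ℝ :=
      fun M => Real.sqrt (∑ i, ∑ j, (M i j)^2)
    (Xstarᵀ = Xstar ∧ ∀ v : Fin p → ℝ, 0 ≤ v ⬝ᵥ Xstar *ᵥ v) ∧
    (∀ X : Matrix (Fin p) (Fin p) ℝ, Xᵀ = X → (∀ v : Fin p → ℝ, 0 ≤ v ⬝ᵥ X *ᵥ v) →
      frob (Xstar - C) ≤ frob (X - C)) ∧
    (∀ X : Matrix (Fin p) (Fin p) ℝ, Xᵀ = X → (∀ v : Fin p → ℝ, 0 ≤ v ⬝ᵥ X *ᵥ v) →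
      frob (X - C) = frob (Xstar - C) → X = Xstar) := by
  intro Xstar frob
  have hfrob (M : Matrix (Fin p) (Fin p) ℝ) : frob M = √(sqFrobenius M) := rfl
  have hU' : Uᵀ * U = 1 := mul_eq_one_comm.mp hU
  have key (X : Matrix (Fin p) (Fin p) ℝ) (hXt : Xᵀ = X) (hX : ∀ v, 0 ≤ v ⬝ᵥ X *ᵥ v) :
      sqFrobenius (Xstar - C) + sqFrobenius (X - Xstar) ≤ sqFrobenius (X - C) :=
    hC ▸ sqFrobenius_clip_add_le_of_posSemidef hU hU'
      (posSemidef_iff_transpose_dotProduct_mulVec.mpr ⟨hXt, hX⟩) d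
  refine ⟨?_, fun X hXt hX => ?_, fun X hXt hX hfrob_eq => ?_⟩
  · refine posSemidef_iff_transpose_dotProduct_mulVec.mp ?_
    simpa only [conjTranspose_eq_transpose_of_trivial] using
      (PosSemidef.diagonal fun i => le_max_right (d i) 0).mul_mul_conjTranspose_same U
  · rw [hfrob, hfrob]
    exact Real.sqrt_le_sqrt <| by linarith [key X hXt hX, sqFrobenius_nonneg (X - Xstar)]
  · rw [hfrob, hfrob] at hfrob_eq
    have hsq : sqFrobenius (X - C) = sqFrobenius (Xstar - C) :=
      (Real.sqrt_inj (sqFrobenius_nonneg _) (sqFrobenius_nonneg _)).mp hfrob_eq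
    have hzero : sqFrobenius (X - Xstar) = 0 := by
      linarith [key X hXt hX, sqFrobenius_nonneg (X - Xstar)]
    exact sub_eq_zero.mp (sqFrobenius_eq_zero_iff.mp hzero)

/-- For a symmetric matrix `C = U Λ Uᵀ` with `U` orthogonal and `Λ` diagonal,
the matrix `U Λ₊ Uᵀ` (eigenvalues clipped at 0) is the unique Frobenius-norm
projection of `C` onto the cone of symmetric PSD matrices. -/
theorem psd_projection_eigenvalue_clipping {p : ℕ}
    (C U : Matrix (Fin p) (Fin p) ℝ) (d : Fin p → ℝ)
    (hCsymm : Cᵀ = C)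
    (hU : U * Uᵀ = 1) (hU' : Uᵀ * U = 1)
    (hC : C = U * Matrix.diagonal d * Uᵀ) :
    let Xstar := U * Matrix.diagonal (fun i => max (d i) 0) * Uᵀ
    let frob : Matrix (Fin p) (Fin p) ℝ → ℝ :=
      fun M => Real.sqrt (∑ i, ∑ j, (M i j)^2)
    (Xstarᵀ = Xstar ∧ ∀ v : Fin p → ℝ, 0 ≤ v ⬝ᵥ Xstar *ᵥ v) ∧
    (∀ X : Matrix (Fin p) (Fin p) ℝ, Xᵀ = X → (∀ v : Fin p → ℝ, 0 ≤ v ⬝ᵥ X *ᵥ v) →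
      frob (Xstar - C) ≤ frob (X - C)) ∧
    (∀ X : Matrix (Fin p) (Fin p) ℝ, Xᵀ = X → (∀ v : Fin p → ℝ, 0 ≤ v ⬝ᵥ X *ᵥ v) →
      frob (X - C) = frob (Xstar - C) → X = Xstar) :=
  psd_projection_eigenvalue_clipping_general C U d hU hC
end

section
/- The combined proximal operator identity: for u ∈ ℝⁿ, μ₁, μ₂ > 0, prox of f(v) = μ₁‖v‖₁ + μ₂‖v‖₂ satisfies prox_f(u) = prox_{μ₂‖·‖₂}( prox_{μ₁‖·‖₁}(u) ), i.e., soft-thresholding coordinatewise by μ₁ followed by block shrinkage by μ₂ minimizes μ₁‖v‖₁ + μ₂‖v‖₂ + (1/2)‖v − u‖₂². -/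
/-!
The minimizer of a sum of a convex function `g` and `½‖· - u‖²` is the point `w` with
`u - w ∈ ∂g(w)`. Split `u - w = (u - s) + (s - w)`. Soft-thresholding makes `u - s` equal to
`μ₁` times a subgradient of `‖·‖₁` at `s`, and also at `w`, since `w` is a nonnegative multiple of
`s` and so has the same sign pattern. Block shrinkage makes `s - w` equal to `μ₂` times a
subgradient of `‖·‖₂` at `w`. Adding the two subgradient inequalities gives `u - w ∈ ∂g(w)`.
-/

open RealInnerProductSpace

noncomputable section

def softThreshold (μ t : ℝ) : ℝ := Real.sign t * max (|t| - μ) 0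

lemma abs_sub_softThreshold_le {μ : ℝ} (hμ : 0 ≤ μ) (t : ℝ) : |t - softThreshold μ t| ≤ μ := by
  unfold softThreshold
  rcases lt_trichotomy t 0 with ht | rfl | ht
  · rw [Real.sign_of_neg ht, abs_of_neg ht, abs_le]
    constructor <;> cases max_cases (-t - μ) 0 <;> linarith
  · simpa using hμ
  · rw [Real.sign_of_pos ht, abs_of_pos ht, abs_le]
    constructor <;> cases max_cases (t - μ) 0 <;> linarith

lemma sub_softThreshold_mul_softThreshold (μ t : ℝ) :
    (t - softThreshold μ t) * softThreshold μ t = μ * |softThreshold μ t| := by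
  unfold softThreshold
  rcases lt_trichotomy t 0 with ht | rfl | ht
  · rw [Real.sign_of_neg ht, abs_of_neg ht]
    rcases max_cases (-t - μ) 0 with ⟨h, hle⟩ | ⟨h, -⟩ <;> rw [h]
    · rw [abs_of_nonpos (by linarith)]; ring
    · simp
  · simp
  · rw [Real.sign_of_pos ht, abs_of_pos ht]
    rcases max_cases (t - μ) 0 with ⟨h, hle⟩ | ⟨h, -⟩ <;> rw [h]
    · rw [abs_of_nonneg (by linarith)]; ring
    · simp

section InnerProductSpace

variable {E : Type*} [NormedAddCommGroup E] [InnerProductSpace ℝ E]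

lemma mul_norm_add_inner_sub_le {μ : ℝ} {d w : E} (hd : ‖d‖ ≤ μ) (hdw : ⟪d, w⟫ = μ * ‖w‖)
    (v : E) : μ * ‖w‖ + ⟪d, v - w⟫ ≤ μ * ‖v‖ := by
  rw [inner_sub_right, hdw]
  have := mul_le_mul_of_nonneg_right hd (norm_nonneg v)
  linarith [real_inner_le_norm d v]

def blockShrink (μ : ℝ) (s : E) : E := max (1 - μ / ‖s‖) 0 • s

lemma blockShrink_eq_zero {μ : ℝ} {s : E} (h : ‖s‖ ≤ μ) : blockShrink μ s = 0 := by
  rcases (norm_nonneg s).eq_or_lt with hs | hs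
  · simp [blockShrink, norm_eq_zero.mp hs.symm]
  · have : 1 - μ / ‖s‖ ≤ 0 := by rw [sub_nonpos, one_le_div hs]; exact h
    simp [blockShrink, max_eq_right this]

lemma blockShrink_of_lt {μ : ℝ} (hμ : 0 ≤ μ) {s : E} (h : μ < ‖s‖) :
    blockShrink μ s = (1 - μ / ‖s‖) • s := by
  rw [blockShrink, max_eq_left]
  rw [sub_nonneg, div_le_one (hμ.trans_lt h)]; exact h.le

lemma sub_blockShrink_of_lt {μ : ℝ} (hμ : 0 ≤ μ) {s : E} (h : μ < ‖s‖) :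
    s - blockShrink μ s = (μ / ‖s‖) • s := by
  rw [blockShrink_of_lt hμ h, sub_smul, one_smul, sub_sub_cancel]

lemma norm_sub_blockShrink_le {μ : ℝ} (hμ : 0 ≤ μ) (s : E) : ‖s - blockShrink μ s‖ ≤ μ := by
  rcases le_or_gt ‖s‖ μ with h | h
  · rwa [blockShrink_eq_zero h, sub_zero]
  · have hs : 0 < ‖s‖ := hμ.trans_lt h
    rw [sub_blockShrink_of_lt hμ h, norm_smul,
      Real.norm_of_nonneg (div_nonneg hμ hs.le), div_mul_cancel₀ _ hs.ne']

lemma inner_sub_blockShrink_blockShrink {μ : ℝ} (hμ : 0 ≤ μ) (s : E) :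
    ⟪s - blockShrink μ s, blockShrink μ s⟫ = μ * ‖blockShrink μ s‖ := by
  rcases le_or_gt ‖s‖ μ with h | h
  · simp [blockShrink_eq_zero h]
  · have hs : 0 < ‖s‖ := hμ.trans_lt h
    have hc : 0 ≤ 1 - μ / ‖s‖ := by rw [sub_nonneg, div_le_one hs]; exact h.le
    rw [sub_blockShrink_of_lt hμ h, blockShrink_of_lt hμ h, real_inner_smul_left, real_inner_smul_right, real_inner_self_eq_norm_sq, norm_smul,
      Real.norm_of_nonneg hc]
    field_simp

lemma add_half_norm_sub_sq_le_of_forall_add_inner_le {g : E → ℝ} {u w : E}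
    (hg : ∀ v, g w + ⟪u - w, v - w⟫ ≤ g v) (v : E) :
    g w + 1 / 2 * ‖w - u‖ ^ 2 ≤ g v + 1 / 2 * ‖v - u‖ ^ 2 := by
  have hsplit : ‖v - u‖ ^ 2 = ‖v - w‖ ^ 2 - 2 * ⟪v - w, u - w⟫ + ‖w - u‖ ^ 2 := by
    rw [← sub_sub_sub_cancel_right v u w, norm_sub_sq_real, norm_sub_rev u w]
  rw [hsplit, real_inner_comm]
  nlinarith [hg v, sq_nonneg ‖v - w‖]

end InnerProductSpace

lemma mul_sum_abs_add_inner_sub_le {ι : Type*} [Fintype ι] {μ : ℝ} {d w : EuclideanSpace ℝ ι}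
    (hd : ∀ i, |d i| ≤ μ) (hdw : ∀ i, d i * w i = μ * |w i|) (v : EuclideanSpace ℝ ι) :
    μ * ∑ i, |w i| + ⟪d, v - w⟫ ≤ μ * ∑ i, |v i| := by
  simp only [PiLp.inner_apply, PiLp.sub_apply, RCLike.inner_apply, conj_trivial, Finset.mul_sum,
    ← Finset.sum_add_distrib]
  refine Finset.sum_le_sum fun i _ => ?_
  have hdv : d i * v i ≤ μ * |v i| :=
    calc d i * v i ≤ |d i| * |v i| := by rw [← abs_mul]; exact le_abs_self _
      _ ≤ μ * |v i| := mul_le_mul_of_nonneg_right (hd i) (abs_nonneg _)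
  linear_combination hdv - hdw i

end

/-- Sparse group lasso prox decomposition: coordinatewise soft-thresholding by
`μ₁` followed by block shrinkage by `μ₂` minimizes
`v ↦ μ₁‖v‖₁ + μ₂‖v‖₂ + (1/2)‖v − u‖₂²`. -/
theorem sparse_group_lasso_prox_decomposition {n : ℕ}
    (μ₁ μ₂ : ℝ) (hμ₁ : 0 < μ₁) (hμ₂ : 0 < μ₂)
    (u : EuclideanSpace ℝ (Fin n)) :
    let s : EuclideanSpace ℝ (Fin n) := WithLp.toLp 2 (fun i => Real.sign (u i) * max (|u i| - μ₁) 0)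
    let w : EuclideanSpace ℝ (Fin n) := (max (1 - μ₂ / ‖s‖) 0) • s
    let f : EuclideanSpace ℝ (Fin n) → ℝ :=
      fun v => μ₁ * (∑ i, |v i|) + μ₂ * ‖v‖ + (1/2) * ‖v - u‖^2
    ∀ v, f w ≤ f v := by
  intro s w f
  have hsign (i : Fin n) : (u - s) i * w i = μ₁ * |w i| := by
    have hc : 0 ≤ max (1 - μ₂ / ‖s‖) 0 := le_max_right _ _
    change (u i - softThreshold μ₁ (u i)) * (max (1 - μ₂ / ‖s‖) 0 * softThreshold μ₁ (u i)) =
      μ₁ * |max (1 - μ₂ / ‖s‖) 0 * softThreshold μ₁ (u i)|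
    rw [mul_left_comm, sub_softThreshold_mul_softThreshold, abs_mul, abs_of_nonneg hc]
    ring
  have hsub₁ :=
    mul_sum_abs_add_inner_sub_le (fun i => abs_sub_softThreshold_le hμ₁.le (u i)) hsign
  have hsub₂ : ∀ v, μ₂ * ‖w‖ + ⟪s - w, v - w⟫ ≤ μ₂ * ‖v‖ :=
    mul_norm_add_inner_sub_le (norm_sub_blockShrink_le hμ₂.le s)
      (inner_sub_blockShrink_blockShrink hμ₂.le s)
  refine add_half_norm_sub_sq_le_of_forall_add_inner_le
    (g := fun v : EuclideanSpace ℝ (Fin n) => μ₁ * ∑ i, |v i| + μ₂ * ‖v‖) fun v => ?_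
  rw [← sub_add_sub_cancel u s w, inner_add_left]
  linarith [hsub₁ v, hsub₂ v]
end
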